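/- For every r ≥ 2, if a list of pairwise distinct transpositions, none equal to any of the factors (1 2), (3 4), ..., (2r−1, 2r), has product equal to the permutation (1 2)(3 4)···(2r−1, 2r) of {1, ..., 2r}, then the list has length at least 2r + ε_r, where ε_r = 0 if r is even and ε_r = 1 if r is odd. -/

import Mathlib

/-!
A list of transpositions is a multigraph on the points it moves. If its product `σ` is an
involution and no transposition of the list is a 2-cycle of `σ`, this graph has at least as many
edges as vertices. Indeed, a vertex `a` of degree one can be deleted together with its edge
`(a c)`: the product becomes `σ` with `a` spliced out of its 2-cycle, which satisfies the same
hypotheses, and `c` keeps an edge since otherwise `(a c)` would be the 2-cycle of `σ` through `a`.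
When every vertex has degree at least two, the degree sum gives the bound. For
`(1 2)(3 4)⋯(2r-1 2r)` there are `2r` moved points, and the sign gives `length ≡ r [MOD 2]`.
-/

open Equiv Finset Function

namespace Equiv.Perm

variable {α : Type*}

theorem list_prod_apply_eq_self {l : List (Perm α)} {x : α} (h : ∀ τ ∈ l, τ x = x) :
    l.prod x = x := by
  induction l with
  | nil => rfl
  | cons τ l ih =>
    rw [List.prod_cons, mul_apply, ih fun ρ hρ => h ρ (List.mem_cons_of_mem τ hρ),
      h τ List.mem_cons_self]

theorem exists_mem_apply_ne_of_list_prod_apply_ne {l : List (Perm α)} {x : α}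
    (h : l.prod x ≠ x) : ∃ τ ∈ l, τ x ≠ x := by
  by_contra! h'
  exact h (list_prod_apply_eq_self h')

variable [DecidableEq α]

theorem IsSwap.ne_one {τ : Perm α} (h : τ.IsSwap) : τ ≠ 1 := by
  obtain ⟨x, y, hxy, rfl⟩ := h
  exact fun h1 => hxy (swap_eq_one_iff.mp h1)

theorem IsSwap.eq_swap_apply {τ : Perm α} (h : τ.IsSwap) {a : α} (ha : τ a ≠ a) :
    τ = swap a (τ a) := by
  obtain ⟨x, y, -, rfl⟩ := h
  rcases (swap_apply_ne_self_iff.mp ha).2 with rfl | rfl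
  · rw [swap_apply_left]
  · rw [swap_apply_right, swap_comm]

theorem swap_mul_apply_of_involutive {σ : Perm α} (hσ : Involutive σ) (a x : α) :
    (swap a (σ a) * σ) x = if x = a ∨ x = σ a then x else σ x := by
  have hσa := hσ a
  have hσx := hσ x
  simp only [mul_apply, swap_apply_def]
  split_ifs <;> grind

theorem involutive_swap_mul {σ : Perm α} (hσ : Involutive σ) (a : α) :
    Involutive (swap a (σ a) * σ) := by
  intro x
  have hσa := hσ a
  have hσx := hσ x
  simp only [swap_mul_apply_of_involutive hσ]
  split_ifs <;> grind

theorem ne_swap_swap_mul_apply {σ τ : Perm α} (hσ : Involutive σ) (hτ : τ.IsSwap)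
    (hne : ∀ x, τ ≠ swap x (σ x)) (a x : α) : τ ≠ swap x ((swap a (σ a) * σ) x) := by
  rw [swap_mul_apply_of_involutive hσ]
  split_ifs
  · rw [swap_self]
    exact hτ.ne_one
  · exact hne x

theorem list_prod_append_cons_swap_apply {l₁ l₂ : List (Perm α)} {a : α}
    (h₂ : ∀ ρ ∈ l₂, ρ a = a) (c : α) : (l₁ ++ swap a c :: l₂).prod a = l₁.prod c := by
  simp [List.prod_append, list_prod_apply_eq_self h₂]

theorem list_prod_append_eq_swap_mul {l₁ l₂ : List (Perm α)} {a : α}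
    (h₁ : ∀ ρ ∈ l₁, ρ a = a) (h₂ : ∀ ρ ∈ l₂, ρ a = a) (c : α) :
    (l₁ ++ l₂).prod =
      swap a ((l₁ ++ swap a c :: l₂).prod a) * (l₁ ++ swap a c :: l₂).prod := by
  have hconj := swap_apply_apply l₁.prod a c
  rw [list_prod_apply_eq_self h₁] at hconj
  rw [list_prod_append_cons_swap_apply h₂, hconj]
  simp [List.prod_append, mul_assoc]

theorem exists_finset_forall_apply_ne_mem {l : List (Perm α)} (hl : ∀ τ ∈ l, τ.IsSwap) :
    ∃ s : Finset α, ∀ τ ∈ l, ∀ x, τ x ≠ x → x ∈ s := by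
  induction l with
  | nil => exact ⟨∅, by simp⟩
  | cons τ l ih =>
    obtain ⟨s, hs⟩ := ih fun ρ hρ => hl ρ (List.mem_cons_of_mem τ hρ)
    obtain ⟨a, b, -, rfl⟩ := hl τ List.mem_cons_self
    refine ⟨insert a (insert b s), fun ρ hρ x hx => ?_⟩
    rcases List.mem_cons.mp hρ with rfl | hρ
    · rcases (swap_apply_ne_self_iff.mp hx).2 with rfl | rfl <;> simp
    · exact mem_insert_of_mem (mem_insert_of_mem (hs ρ hρ x hx))

theorem exists_map_ofSubtype_eq {s : Finset α} {l : List (Perm α)} (hl : ∀ τ ∈ l, τ.IsSwap)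
    (hs : ∀ τ ∈ l, ∀ x, τ x ≠ x → x ∈ s) :
    ∃ l' : List (Perm s), (∀ τ ∈ l', τ.IsSwap) ∧ l'.map ofSubtype = l := by
  induction l with
  | nil => exact ⟨[], by simp, rfl⟩
  | cons τ l ih =>
    obtain ⟨l', hl', rfl⟩ := ih (fun ρ hρ => hl ρ (List.mem_cons_of_mem τ hρ))
      fun ρ hρ => hs ρ (List.mem_cons_of_mem τ hρ)
    obtain ⟨a, b, hab, rfl⟩ := hl _ List.mem_cons_self
    have ha := hs _ List.mem_cons_self a (by simpa using hab.symm)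
    have hb := hs _ List.mem_cons_self b (by simpa using hab)
    refine ⟨swap ⟨a, ha⟩ ⟨b, hb⟩ :: l', ?_, by simp⟩
    intro ρ hρ
    rcases List.mem_cons.mp hρ with rfl | hρ
    · exact ⟨_, _, by simpa using hab, rfl⟩
    · exact hl' ρ hρ

theorem even_length_iff_of_list_prod_eq {l₁ l₂ : List (Perm α)} (h₁ : ∀ τ ∈ l₁, τ.IsSwap)
    (h₂ : ∀ τ ∈ l₂, τ.IsSwap) (h : l₁.prod = l₂.prod) : Even l₁.length ↔ Even l₂.length := by
  have hl : ∀ τ ∈ l₁ ++ l₂, τ.IsSwap := List.forall_mem_append.mpr ⟨h₁, h₂⟩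
  obtain ⟨s, hs⟩ := exists_finset_forall_apply_ne_mem hl
  obtain ⟨L, hL, hmap⟩ := exists_map_ofSubtype_eq hl hs
  obtain ⟨L₁, L₂, rfl, rfl, rfl⟩ := List.map_eq_append_iff.mp hmap
  obtain ⟨hL₁, hL₂⟩ := List.forall_mem_append.mp hL
  have hsign := congrArg sign (ofSubtype_injective (by simpa [map_list_prod] using h) :
    L₁.prod = L₂.prod)
  rw [sign_prod_list_swap hL₁, sign_prod_list_swap hL₂] at hsign
  rw [List.length_map, List.length_map, ← neg_one_pow_eq_one_iff_even (R := ℤˣ) (by decide),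
    ← neg_one_pow_eq_one_iff_even (R := ℤˣ) (by decide), hsign]

end Equiv.Perm

namespace SwapFactorization

open Perm

variable {α : Type*} [DecidableEq α]

/-- The degree of `x` in the multigraph whose edges are the transpositions of `l`. -/
def degree (l : List (Perm α)) (x : α) : ℕ :=
  l.countP fun τ => τ x ≠ x

theorem degree_pos_iff {l : List (Perm α)} {x : α} : 0 < degree l x ↔ ∃ τ ∈ l, τ x ≠ x := by
  simp [degree, List.countP_pos_iff]

theorem degree_eq_zero_iff {l : List (Perm α)} {x : α} :
    degree l x = 0 ↔ ∀ τ ∈ l, τ x = x := by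
  simp [degree, List.countP_eq_zero]

theorem exists_eq_append_cons_of_degree_eq_one {l : List (Perm α)} {a : α}
    (h : degree l a = 1) :
    ∃ l₁ τ l₂, l = l₁ ++ τ :: l₂ ∧ τ a ≠ a ∧ ∀ ρ ∈ l₁ ++ l₂, ρ a = a := by
  obtain ⟨τ, hτ, hτa⟩ := degree_pos_iff.mp (h ▸ Nat.one_pos)
  obtain ⟨l₁, l₂, rfl⟩ := List.append_of_mem hτ
  refine ⟨l₁, τ, l₂, rfl, hτa, degree_eq_zero_iff.mp ?_⟩
  simp only [degree, List.countP_append, List.countP_cons, ne_eq, hτa, not_false_eq_true,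
    decide_true, ite_true] at h ⊢
  omega

section

variable [Fintype α]

def touched (l : List (Perm α)) : Finset α :=
  univ.filter fun x => degree l x ≠ 0

theorem mem_touched {l : List (Perm α)} {x : α} : x ∈ touched l ↔ ∃ τ ∈ l, τ x ≠ x := by
  simp [touched, ← degree_pos_iff, Nat.pos_iff_ne_zero]

theorem touched_append_cons (l₁ l₂ : List (Perm α)) (τ : Perm α) :
    touched (l₁ ++ τ :: l₂) = τ.support ∪ touched (l₁ ++ l₂) := by
  ext x
  simp only [mem_touched, mem_union, Perm.mem_support, List.mem_append, List.mem_cons]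
  aesop

theorem support_list_prod_subset_touched (l : List (Perm α)) : l.prod.support ⊆ touched l :=
  fun _ hx => mem_touched.mpr (exists_mem_apply_ne_of_list_prod_apply_ne (Perm.mem_support.mp hx))

theorem sum_degree {l : List (Perm α)} (hl : ∀ τ ∈ l, τ.IsSwap) :
    ∑ x, degree l x = 2 * l.length := by
  induction l with
  | nil => simp [degree]
  | cons τ l ih =>
    have hτ : ∑ x, (if τ x ≠ x then 1 else 0) = 2 := by
      rw [sum_boole]
      exact card_support_eq_two.mpr (hl τ List.mem_cons_self)
    simp only [degree, List.countP_cons, decide_eq_true_eq] at ih ⊢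
    rw [sum_add_distrib, ih fun ρ hρ => hl ρ (List.mem_cons_of_mem τ hρ), hτ, List.length_cons]
    ring

theorem card_touched_le_length_of_forall_two_le_degree {l : List (Perm α)}
    (hl : ∀ τ ∈ l, τ.IsSwap) (h : ∀ x ∈ touched l, 2 ≤ degree l x) :
    (touched l).card ≤ l.length := by
  have : 2 * (touched l).card ≤ 2 * l.length :=
    calc 2 * (touched l).card = ∑ _x ∈ touched l, 2 := by rw [sum_const, smul_eq_mul, mul_comm]
      _ ≤ ∑ x ∈ touched l, degree l x := sum_le_sum h
      _ = 2 * l.length := by rw [touched, sum_filter_ne_zero, sum_degree hl]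
  omega

theorem card_touched_le_length {l : List (Perm α)} (hl : ∀ τ ∈ l, τ.IsSwap)
    (hinv : Involutive l.prod) (hne : ∀ τ ∈ l, ∀ x, τ ≠ swap x (l.prod x)) :
    (touched l).card ≤ l.length := by
  by_cases hleaf : ∃ a, degree l a = 1
  swap
  · push Not at hleaf
    refine card_touched_le_length_of_forall_two_le_degree hl fun x hx => ?_
    have h0 : degree l x ≠ 0 := (mem_filter.mp hx).2
    have h1 := hleaf x
    omega
  obtain ⟨a, ha⟩ := hleaf
  obtain ⟨l₁, τ, l₂, rfl, hτa, hfix⟩ := exists_eq_append_cons_of_degree_eq_one ha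
  obtain ⟨h₁, h₂⟩ := List.forall_mem_append.mp hfix
  obtain ⟨c, rfl⟩ : ∃ c, τ = swap a c := ⟨_, (hl τ (by simp)).eq_swap_apply hτa⟩
  have hsub : l₁ ++ l₂ ⊆ l₁ ++ swap a c :: l₂ :=
    ((List.sublist_cons_self _ l₂).append_left l₁).subset
  have hprod := list_prod_append_eq_swap_mul h₁ h₂ c
  set σ := (l₁ ++ swap a c :: l₂).prod
  have hc : c ∈ touched (l₁ ++ l₂) := by
    by_contra hc
    rw [mem_touched] at hc
    push Not at hc
    have hσa : σ a = c := by
      rw [list_prod_append_cons_swap_apply h₂,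
        list_prod_apply_eq_self fun ρ hρ => hc ρ (List.mem_append_left _ hρ)]
    exact hne (swap a c) (by simp) a (by rw [hσa])
  have ih : (touched (l₁ ++ l₂)).card ≤ (l₁ ++ l₂).length :=
    card_touched_le_length (fun ρ hρ => hl ρ (hsub hρ)) (hprod ▸ involutive_swap_mul hinv a)
      fun ρ hρ x => hprod ▸ ne_swap_swap_mul_apply hinv (hl ρ (hsub hρ)) (hne ρ (hsub hρ)) a x
  have hac : a ≠ c := fun h => hτa (by rw [← h, swap_self, refl_apply])
  rw [touched_append_cons, support_swap hac, insert_union, singleton_union, insert_eq_of_mem hc]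
  rw [List.length_append] at ih
  rw [List.length_append, List.length_cons]
  exact (card_insert_le _ _).trans (by omega)
termination_by l.length
decreasing_by subst_vars; simp

theorem card_support_le_length {l : List (Perm α)} (hl : ∀ τ ∈ l, τ.IsSwap)
    (hinv : Involutive l.prod) (hne : ∀ τ ∈ l, ∀ x, τ ≠ swap x (l.prod x)) :
    l.prod.support.card ≤ l.length :=
  (card_le_card (support_list_prod_subset_touched l)).trans (card_touched_le_length hl hinv hne)

end

theorem card_le_length_of_forall_list_prod_apply_ne {l : List (Perm α)}
    (hl : ∀ τ ∈ l, τ.IsSwap) (hinv : Involutive l.prod)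
    (hne : ∀ τ ∈ l, ∀ x, τ ≠ swap x (l.prod x)) {t : Finset α} (ht : ∀ x ∈ t, l.prod x ≠ x) :
    t.card ≤ l.length := by
  obtain ⟨s, hs⟩ := exists_finset_forall_apply_ne_mem hl
  obtain ⟨l', hl', rfl⟩ := exists_map_ofSubtype_eq hl hs
  rw [← map_list_prod] at hinv hne
  have happly (x : s) : ofSubtype l'.prod x = l'.prod x := ofSubtype_apply_of_mem _ x.2
  have hinv' : Involutive l'.prod := fun x => Subtype.ext (by rw [← happly, ← happly, hinv])
  have hne' : ∀ τ ∈ l', ∀ x, τ ≠ swap x (l'.prod x) := by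
    rintro τ hτ x rfl
    exact hne _ (List.mem_map_of_mem hτ) x (by rw [ofSubtype_swap_eq, happly])
  have hsupp : t ⊆ l'.prod.support.map (Embedding.subtype _) := by
    intro x hx
    obtain ⟨τ, hτ, hτx⟩ := exists_mem_apply_ne_of_list_prod_apply_ne (ht x hx)
    have hxs := hs τ hτ x hτx
    refine mem_map.mpr ⟨⟨x, hxs⟩, Perm.mem_support.mpr fun h => ht x hx ?_, rfl⟩
    rw [← map_list_prod, ofSubtype_apply_of_mem _ hxs, h]
  calc t.card ≤ (l'.prod.support.map (Embedding.subtype _)).card := card_le_card hsupp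
    _ = l'.prod.support.card := card_map _
    _ ≤ l'.length := card_support_le_length hl' hinv' hne'
    _ = (l'.map ofSubtype).length := (List.length_map _).symm

end SwapFactorization

open SwapFactorization

def pairSwaps (r : ℕ) : List (Perm ℕ) :=
  (List.range r).map fun i => swap (2 * i + 1) (2 * i + 2)

theorem isSwap_of_mem_pairSwaps {r : ℕ} : ∀ τ ∈ pairSwaps r, τ.IsSwap := by
  simp only [pairSwaps, List.mem_map]
  rintro _ ⟨i, -, rfl⟩
  exact ⟨_, _, by omega, rfl⟩

theorem prod_pairSwaps_apply (r x : ℕ) :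
    (pairSwaps r).prod x =
      if x = 0 ∨ 2 * r < x then x else if x % 2 = 0 then x - 1 else x + 1 := by
  induction r generalizing x with
  | zero => simp [pairSwaps]
  | succ r ih =>
    rw [pairSwaps, List.range_succ, List.map_append, List.prod_append, ← pairSwaps,
      Perm.mul_apply, List.map_singleton, List.prod_singleton, swap_apply_def]
    split_ifs <;> simp_all <;> omega

theorem involutive_prod_pairSwaps (r : ℕ) : Involutive (pairSwaps r).prod := by
  intro x
  simp only [prod_pairSwaps_apply]
  split_ifs <;> grind

theorem swap_prod_pairSwaps_apply (r x : ℕ) :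
    swap x ((pairSwaps r).prod x) = 1 ∨
      ∃ i < r, swap x ((pairSwaps r).prod x) = swap (2 * i + 1) (2 * i + 2) := by
  rw [prod_pairSwaps_apply]
  split_ifs with h0 h2
  · exact Or.inl (swap_self x)
  · refine Or.inr ⟨x / 2 - 1, by omega, ?_⟩
    rw [swap_comm]
    congr 1 <;> omega
  · exact Or.inr ⟨x / 2, by omega, by congr 1 <;> omega⟩

theorem length_ge_undo_r_disjoint_swaps_general (r : ℕ)
    (l : List (Equiv.Perm ℕ))
    (hsw : ∀ τ ∈ l, τ.IsSwap)
    (hne : ∀ τ ∈ l, ∀ i < r, τ ≠ Equiv.swap (2 * i + 1) (2 * i + 2))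
    (hprod : l.prod =
      ((List.range r).map fun i => Equiv.swap (2 * i + 1) (2 * i + 2)).prod) :
    2 * r + (if Even r then 0 else 1) ≤ l.length := by
  change l.prod = (pairSwaps r).prod at hprod
  have hne' : ∀ τ ∈ l, ∀ x, τ ≠ swap x (l.prod x) := by
    intro τ hτ x
    rw [hprod]
    rcases swap_prod_pairSwaps_apply r x with h | ⟨i, hi, h⟩ <;> rw [h]
    · exact (hsw τ hτ).ne_one
    · exact hne τ hτ i hi
  have hbound : (Finset.Icc 1 (2 * r)).card ≤ l.length :=
    card_le_length_of_forall_list_prod_apply_ne hsw (hprod ▸ involutive_prod_pairSwaps r) hne'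
      fun x hx => by
        rw [hprod, prod_pairSwaps_apply]
        rw [Finset.mem_Icc] at hx
        split_ifs <;> omega
  have hparity : Even l.length ↔ Even r := by
    simpa [pairSwaps] using Perm.even_length_iff_of_list_prod_eq hsw isSwap_of_mem_pairSwaps hprod
  rw [Nat.card_Icc, Nat.add_sub_cancel] at hbound
  split_ifs with hr
  · exact hbound
  · have : l.length ≠ 2 * r := fun h => hr (hparity.mp (h ▸ even_two_mul r))
    omega

/-- For every `r ≥ 2`, if a list of pairwise distinct transpositions, none equal
to any of the factors `(1 2), (3 4), ..., (2r-1, 2r)`, has product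
`(1 2)(3 4)⋯(2r-1, 2r)`, then the list has length at least `2r + ε_r`, where
`ε_r = 0` if `r` is even and `ε_r = 1` if `r` is odd. -/
theorem length_ge_undo_r_disjoint_swaps (r : ℕ) (hr : 2 ≤ r)
    (l : List (Equiv.Perm ℕ))
    (hsw : ∀ τ ∈ l, τ.IsSwap) (hnd : l.Nodup)
    (hne : ∀ τ ∈ l, ∀ i < r, τ ≠ Equiv.swap (2 * i + 1) (2 * i + 2))
    (hprod : l.prod =
      ((List.range r).map fun i => Equiv.swap (2 * i + 1) (2 * i + 2)).prod) :
    2 * r + (if Even r then 0 else 1) ≤ l.length :=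
  length_ge_undo_r_disjoint_swaps_general r l hsw hne hprod
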